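/- Let φ : ℝ² → Mₙ(ℝ) be infinitely differentiable and satisfy the noncommutative Burgers equation φ_y = φ_xx + 2φ_x φ. Let α, β ∈ Mₙ(ℝ) be constant matrices such that α + β·φ(x,y) is invertible for every (x,y). Then φ' := (α + βφ)·φ·(α + βφ)⁻¹ + β·φ_x·(α + βφ)⁻¹ also satisfies the noncommutative Burgers equation φ'_y = φ'_xx + 2φ'_x φ'. -/

import Mathlib

attribute [local instance] Matrix.normedAddCommGroup Matrix.normedSpace

/-- Partial derivative in the `x`-direction of a function of two real variables. -/
noncomputable def pdx {E : Type*} [NormedAddCommGroup E] [NormedSpace ℝ E]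
    (f : ℝ × ℝ → E) : ℝ × ℝ → E :=
  fun p => fderiv ℝ f p (1, 0)

/-- Partial derivative in the `y`-direction of a function of two real variables. -/
noncomputable def pdy {E : Type*} [NormedAddCommGroup E] [NormedSpace ℝ E]
    (f : ℝ × ℝ → E) : ℝ × ℝ → E :=
  fun p => fderiv ℝ f p (0, 1)

/-! With `g = α + βφ` the transformation reads `φ' = (gφ + g_x) g⁻¹`, i.e. it is the gauge
transformation `φ' g = gφ + g_x`. Differentiating this relation gives
`D(φ') g = g D(φ) + E_x + E φ - φ' E`, where `D(φ) = φ_y - φ_xx - 2 φ_x φ` and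
`E = g_y - g_xx - 2 g_x φ`. So `φ'` solves Burgers whenever `φ` does and `g` is an invertible
solution of the linear equation `E = 0`. That equation is solved by constants and, by Burgers
itself, by `φ`; being invariant under left multiplication by constants, it is solved by `α + βφ`. -/

open scoped ContDiff

section PartialDerivatives

variable {E F : Type*} [NormedAddCommGroup E] [NormedSpace ℝ E] [NormedAddCommGroup F]
  [NormedSpace ℝ F] {f g : ℝ × ℝ → E}

theorem ContDiff.pdx (hf : ContDiff ℝ ∞ f) : ContDiff ℝ ∞ (pdx f) :=
  (hf.fderiv_right le_rfl).clm_apply contDiff_const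

theorem pdx_add (hf : Differentiable ℝ f) (hg : Differentiable ℝ g) :
    pdx (fun p => f p + g p) = fun p => pdx f p + pdx g p := by
  funext p; simp [pdx, fderiv_fun_add (hf p) (hg p)]

theorem pdy_add (hf : Differentiable ℝ f) (hg : Differentiable ℝ g) :
    pdy (fun p => f p + g p) = fun p => pdy f p + pdy g p := by
  funext p; simp [pdy, fderiv_fun_add (hf p) (hg p)]

theorem pdx_const_add (a : E) : pdx (fun p => a + f p) = pdx f := by
  funext p; simp [pdx]

theorem pdy_const_add (a : E) : pdy (fun p => a + f p) = pdy f := by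
  funext p; simp [pdy]

theorem pdx_continuousLinearEquiv_comp (e : E ≃L[ℝ] F) :
    pdx (fun p => e (f p)) = fun p => e (pdx f p) := by
  funext p; simp [pdx, ← Function.comp_def, e.comp_fderiv]

theorem pdy_continuousLinearEquiv_comp (e : E ≃L[ℝ] F) :
    pdy (fun p => e (f p)) = fun p => e (pdy f p) := by
  funext p; simp [pdy, ← Function.comp_def, e.comp_fderiv]

theorem pdx_pdy_comm (hf : ContDiff ℝ 2 f) : pdx (pdy f) = pdy (pdx f) := by
  funext p
  have hd : DifferentiableAt ℝ (fderiv ℝ f) p :=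
    (hf.fderiv_right le_rfl).differentiable one_ne_zero p
  have hsymm := (hf.contDiffAt (x := p)).isSymmSndFDerivAt
    (by simp [minSmoothness_of_isRCLikeNormedField])
  show fderiv ℝ (fun q => fderiv ℝ f q (0, 1)) p (1, 0)
    = fderiv ℝ (fun q => fderiv ℝ f q (1, 0)) p (0, 1)
  simp [fderiv_clm_apply hd (differentiableAt_const _), hsymm (1, 0) (0, 1)]

end PartialDerivatives

section NormedAlgebra

variable {A : Type*} [NormedRing A] [NormedAlgebra ℝ A] {f g : ℝ × ℝ → A}

theorem pdx_mul (hf : Differentiable ℝ f) (hg : Differentiable ℝ g) :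
    pdx (fun p => f p * g p) = fun p => pdx f p * g p + f p * pdx g p := by
  funext p; simp [pdx, fderiv_fun_mul' (hf p) (hg p), add_comm]

theorem pdy_mul (hf : Differentiable ℝ f) (hg : Differentiable ℝ g) :
    pdy (fun p => f p * g p) = fun p => pdy f p * g p + f p * pdy g p := by
  funext p; simp [pdy, fderiv_fun_mul' (hf p) (hg p), add_comm]

theorem pdx_const_mul (b : A) (hf : Differentiable ℝ f) :
    pdx (fun p => b * f p) = fun p => b * pdx f p := by
  funext p; simp [pdx, fderiv_const_mul (hf p)]

theorem pdy_const_mul (b : A) (hf : Differentiable ℝ f) :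
    pdy (fun p => b * f p) = fun p => b * pdy f p := by
  funext p; simp [pdy, fderiv_const_mul (hf p)]

theorem ContDiff.ringInverse [CompleteSpace A] {E : Type*} [NormedAddCommGroup E]
    [NormedSpace ℝ E] {n : ℕ∞ω} {g : E → A} (hg : ContDiff ℝ n g) (hunit : ∀ p, IsUnit (g p)) :
    ContDiff ℝ n fun p => Ring.inverse (g p) :=
  contDiff_iff_contDiffAt.2 fun p => by
    obtain ⟨u, hu⟩ := hunit p
    exact (hu ▸ contDiffAt_ringInverse ℝ u).comp p hg.contDiffAt

end NormedAlgebra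

theorem IsUnit.map_ringInverse {M N F : Type*} [MonoidWithZero M] [MonoidWithZero N]
    [FunLike F M N] [MonoidHomClass F M N] (f : F) {x : M} (hx : IsUnit x) :
    f (Ring.inverse x) = Ring.inverse (f x) := by
  obtain ⟨u, rfl⟩ := hx
  simpa using (Ring.inverse_unit (Units.map (f : M →* N) u)).symm

def IsBurgersSolution {A : Type*} [NormedAddCommGroup A] [NormedSpace ℝ A] [Mul A]
    (φ : ℝ × ℝ → A) : Prop :=
  ∀ p, pdy φ p = pdx (pdx φ) p + 2 • (pdx φ p * φ p)

theorem isBurgersSolution_continuousLinearEquiv_comp_iff {A B : Type*} [NormedAddCommGroup A]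
    [NormedSpace ℝ A] [Mul A] [NormedAddCommGroup B] [NormedSpace ℝ B] [Mul B] (e : A ≃L[ℝ] B)
    (he : ∀ a b, e (a * b) = e a * e b) {φ : ℝ × ℝ → A} :
    IsBurgersSolution (fun p => e (φ p)) ↔ IsBurgersSolution φ := by
  simp only [IsBurgersSolution, pdx_continuousLinearEquiv_comp, pdy_continuousLinearEquiv_comp,
    ← he, ← map_nsmul, ← map_add, e.injective.eq_iff]

namespace IsBurgersSolution

variable {A : Type*} [NormedRing A] [NormedAlgebra ℝ A] [CompleteSpace A] {φ g : ℝ × ℝ → A}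

theorem gauge (hsol : IsBurgersSolution φ) (hφ : ContDiff ℝ ∞ φ) (hg : ContDiff ℝ ∞ g)
    (hunit : ∀ p, IsUnit (g p)) (hlin : ∀ p, pdy g p = pdx (pdx g) p + 2 • (pdx g p * φ p)) :
    IsBurgersSolution fun p => (g p * φ p + pdx g p) * Ring.inverse (g p) := by
  set φ' := fun p => (g p * φ p + pdx g p) * Ring.inverse (g p)
  have hφ' : ContDiff ℝ ∞ φ' := ((hg.mul hφ).add hg.pdx).mul (hg.ringInverse hunit)
  have diff {f : ℝ × ℝ → A} (hf : ContDiff ℝ ∞ f) : Differentiable ℝ f :=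
    hf.differentiable (by simp)
  have h0 : (fun p => φ' p * g p) = fun p => g p * φ p + pdx g p := by
    funext p; simp [φ', mul_assoc, Ring.inverse_mul_cancel _ (hunit p)]
  have hx : (fun p => pdx φ' p * g p + φ' p * pdx g p)
      = fun p => pdx g p * φ p + g p * pdx φ p + pdx (pdx g) p := by
    rw [← pdx_mul (diff hφ') (diff hg), h0, pdx_add (diff (hg.mul hφ)) (diff hg.pdx),
      pdx_mul (diff hg) (diff hφ)]
  have hy : (fun p => pdy φ' p * g p + φ' p * pdy g p)
      = fun p => pdy g p * φ p + g p * pdy φ p + pdy (pdx g) p := by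
    rw [← pdy_mul (diff hφ') (diff hg), h0, pdy_add (diff (hg.mul hφ)) (diff hg.pdx),
      pdy_mul (diff hg) (diff hφ)]
  have hxx : (fun p => pdx (pdx φ') p * g p + pdx φ' p * pdx g p
        + (pdx φ' p * pdx g p + φ' p * pdx (pdx g) p))
      = fun p => pdx (pdx g) p * φ p + pdx g p * pdx φ p
        + (pdx g p * pdx φ p + g p * pdx (pdx φ) p) + pdx (pdx (pdx g)) p := by
    have := congrArg pdx hx
    rwa [pdx_add (diff (hφ'.pdx.mul hg)) (diff (hφ'.mul hg.pdx)),
      pdx_add (diff ((hg.pdx.mul hφ).add (hg.mul hφ.pdx))) (diff hg.pdx.pdx),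
      pdx_add (diff (hg.pdx.mul hφ)) (diff (hg.mul hφ.pdx)),
      pdx_mul (diff hφ'.pdx) (diff hg), pdx_mul (diff hφ') (diff hg.pdx),
      pdx_mul (diff hg.pdx) (diff hφ), pdx_mul (diff hg) (diff hφ.pdx)] at this
  have hlin_x : pdy (pdx g) = fun p => pdx (pdx (pdx g)) p
      + (pdx (pdx g) p * φ p + pdx g p * pdx φ p
        + (pdx (pdx g) p * φ p + pdx g p * pdx φ p)) := by
    simp only [← pdx_pdy_comm (hg.of_le (by norm_cast)), funext hlin, two_nsmul]
    rw [pdx_add (diff hg.pdx.pdx) (diff ((hg.pdx.mul hφ).add (hg.pdx.mul hφ))),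
      pdx_add (diff (hg.pdx.mul hφ)) (diff (hg.pdx.mul hφ)), pdx_mul (diff hg.pdx) (diff hφ)]
  intro p
  apply (hunit p).mul_left_injective
  linear_combination (norm := noncomm_ring) congrFun hy p - congrFun hxx p
    - pdx φ' p * congrFun h0 p - pdx φ' p * congrFun h0 p - congrFun hx p * φ p
    - congrFun hx p * φ p - φ' p * hlin p + hlin p * φ p + g p * hsol p + congrFun hlin_x p

theorem backlund (hsol : IsBurgersSolution φ) (hφ : ContDiff ℝ ∞ φ) (α β : A)
    (hunit : ∀ p, IsUnit (α + β * φ p)) :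
    IsBurgersSolution fun p =>
      ((α + β * φ p) * φ p + β * pdx φ p) * Ring.inverse (α + β * φ p) := by
  have hgx : pdx (fun p => α + β * φ p) = fun p => β * pdx φ p := by
    rw [pdx_const_add, pdx_const_mul β (hφ.differentiable (by simp))]
  have hgy : pdy (fun p => α + β * φ p) = fun p => β * pdy φ p := by
    rw [pdy_const_add, pdy_const_mul β (hφ.differentiable (by simp))]
  have := hsol.gauge hφ (contDiff_const.add (contDiff_const.mul hφ)) hunit fun p => by
    simp only [hgy, hgx, pdx_const_mul β (hφ.pdx.differentiable (by simp)), hsol p, mul_add,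
      mul_smul_comm, mul_assoc]
  rwa [hgx] at this

end IsBurgersSolution

/- The entrywise sup norm on matrices is not submultiplicative, so matrices are not a normed
ring; they are moved to the operators on Euclidean space, where the product rule and the
smoothness of inversion are available. -/
noncomputable def Matrix.toEuclideanCLE (ι : Type*) [Fintype ι] [DecidableEq ι] :
    Matrix ι ι ℝ ≃L[ℝ] (EuclideanSpace ℝ ι →L[ℝ] EuclideanSpace ℝ ι) :=
  LinearEquiv.toContinuousLinearEquiv
    (Matrix.toEuclideanCLM (𝕜 := ℝ) (n := ι)).toAlgEquiv.toLinearEquiv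

theorem Matrix.coe_toEuclideanCLE (ι : Type*) [Fintype ι] [DecidableEq ι] :
    ⇑(Matrix.toEuclideanCLE ι) = Matrix.toEuclideanCLM (𝕜 := ℝ) (n := ι) := rfl

theorem Matrix.toEuclideanCLE_mul {ι : Type*} [Fintype ι] [DecidableEq ι] (a b : Matrix ι ι ℝ) :
    Matrix.toEuclideanCLE ι (a * b) = Matrix.toEuclideanCLE ι a * Matrix.toEuclideanCLE ι b := by
  simp [Matrix.coe_toEuclideanCLE]

/-- The elementary Bäcklund transformation
`φ' = (α + βφ) φ (α + βφ)⁻¹ + β φ_x (α + βφ)⁻¹` maps solutions of the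
noncommutative Burgers equation to solutions. -/
theorem burgers_backlund (n : ℕ) (φ : ℝ × ℝ → Matrix (Fin n) (Fin n) ℝ)
    (hφ : ContDiff ℝ (⊤ : ℕ∞) φ)
    (hburgers : ∀ p, pdy φ p = pdx (pdx φ) p + 2 • (pdx φ p * φ p))
    (α β : Matrix (Fin n) (Fin n) ℝ)
    (hinv : ∀ p, IsUnit (α + β * φ p))
    (φ' : ℝ × ℝ → Matrix (Fin n) (Fin n) ℝ)
    (hφ' : ∀ p, φ' p = (α + β * φ p) * φ p * (α + β * φ p)⁻¹
        + β * pdx φ p * (α + β * φ p)⁻¹) :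
    ∀ p, pdy φ' p = pdx (pdx φ') p + 2 • (pdx φ' p * φ' p) := by
  set e := Matrix.toEuclideanCLE (Fin n)
  have he : ∀ a b, e (a * b) = e a * e b := Matrix.toEuclideanCLE_mul
  have hpdx : pdx (fun p => e (φ p)) = fun p => e (pdx φ p) := pdx_continuousLinearEquiv_comp e
  have hsol : IsBurgersSolution fun p => e (φ p) :=
    (isBurgersSolution_continuousLinearEquiv_comp_iff e he).2 hburgers
  have hunit : ∀ p, IsUnit (e α + e β * e (φ p)) := fun p => by
    simpa [e, Matrix.coe_toEuclideanCLE] using (hinv p).map (Matrix.toEuclideanCLM (𝕜 := ℝ))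
  have hφ'e : (fun p => e (φ' p)) = fun p =>
      ((e α + e β * e (φ p)) * e (φ p) + e β * pdx (fun p => e (φ p)) p)
        * Ring.inverse (e α + e β * e (φ p)) := by
    funext p
    rw [hpdx]
    simp only [hφ' p, Matrix.nonsing_inv_eq_ringInverse, e, Matrix.coe_toEuclideanCLE, map_add,
      map_mul, (hinv p).map_ringInverse, add_mul]
  have := hsol.backlund (e.contDiff.comp hφ) (e α) (e β) hunit
  rw [← hφ'e] at this
  exact (isBurgersSolution_continuousLinearEquiv_comp_iff e he).1 this
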